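/- arXiv:2306.10736 — 3 statements merged into one kernel-verified Lean document; each statement's English description precedes it below -/
import Mathlib

section
/- Under the setting of the bottom-up sampling algorithm ProbSample on a smooth PROB ψ with strictly positive branch parameters, each satisfying assignment τ of the represented formula F is sampled with probability exactly ∏_{n ∈ Rep_ψ(τ), n a decision node} [(1 − I_n)·θ_lo(n) + I_n·θ_hi(n)] / γ(root), where I_n = 1 if the hi-branch of n is taken in Rep_ψ(τ) and 0 otherwise, and γ is the bottom-up weighted model count. -/
/-- A PROB (probabilistic OBDD[∧]): a DAG (here unfolded to a tree) with true/false
leaves, conjunction nodes, and decision nodes carrying a variable and the hi/lo branch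
parameters. -/
inductive Prob (α : Type) : Type
  | tru : Prob α
  | fls : Prob α
  | conj : List (Prob α) → Prob α
  | dec : α → ℝ → ℝ → Prob α → Prob α → Prob α

namespace Prob

variable {α : Type}

/-- Evaluation of the Boolean formula represented by a PROB under an assignment. -/
def eval : Prob α → (α → Bool) → Bool
  | .tru, _ => true
  | .fls, _ => false
  | .conj cs, τ => cs.attach.all (fun c => eval c.1 τ)
  | .dec v _ _ hi lo, τ => if τ v then eval hi τ else eval lo τ
  decreasing_by all_goals first
    | (have := List.sizeOf_lt_of_mem c.2
       simp only [Prob.conj.sizeOf_spec]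
       omega)
    | decreasing_tactic

/-- The set of variables mentioned by a PROB. -/
def vars [DecidableEq α] : Prob α → Finset α
  | .tru => ∅
  | .fls => ∅
  | .conj cs => (cs.attach.map (fun c => vars c.1)).foldr (· ∪ ·) ∅
  | .dec v _ _ hi lo => insert v (vars hi ∪ vars lo)
  decreasing_by all_goals first
    | (have := List.sizeOf_lt_of_mem c.2
       simp only [Prob.conj.sizeOf_spec]
       omega)
    | decreasing_tactic

/-- Bottom-up weighted pass: `γ(⊤) = 1`, `γ(⊥) = 0`, `γ` of a conjunction node is the
product of the children's values, and `γ(n) = θ_lo(n)·γ(lo(n)) + θ_hi(n)·γ(hi(n))` at a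
decision node `n`. -/
def gamma : Prob α → ℝ
  | .tru => 1
  | .fls => 0
  | .conj cs => (cs.attach.map (fun c => gamma c.1)).prod
  | .dec _ θh θl hi lo => θl * gamma lo + θh * gamma hi
  decreasing_by all_goals first
    | (have := List.sizeOf_lt_of_mem c.2
       simp only [Prob.conj.sizeOf_spec]
       omega)
    | decreasing_tactic

/-- The weight of an assignment: the product, over decision nodes on the traversal
`Rep_ψ(τ)`, of the branch parameter of the branch followed by `τ`. -/
def weight : Prob α → (α → Bool) → ℝ
  | .tru, _ => 1
  | .fls, _ => 1
  | .conj cs, τ => (cs.attach.map (fun c => weight c.1 τ)).prod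
  | .dec v θh θl hi lo, τ => if τ v then θh * weight hi τ else θl * weight lo τ
  decreasing_by all_goals first
    | (have := List.sizeOf_lt_of_mem c.2
       simp only [Prob.conj.sizeOf_spec]
       omega)
    | decreasing_tactic

/-- All branch parameters are strictly positive and sum to 1 at every decision node. -/
def ValidParams : Prob α → Prop
  | .tru => True
  | .fls => True
  | .conj cs => ∀ c ∈ cs.attach, ValidParams c.1
  | .dec _ θh θl hi lo => 0 < θh ∧ 0 < θl ∧ θh + θl = 1 ∧ ValidParams hi ∧ ValidParams lo
  decreasing_by all_goals first
    | (have := List.sizeOf_lt_of_mem c.2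
       simp only [Prob.conj.sizeOf_spec]
       omega)
    | decreasing_tactic

/-- Smoothness: at every decision node, the hi and lo branches mention the same
variables. -/
def Smooth [DecidableEq α] : Prob α → Prop
  | .conj cs => ∀ c ∈ cs.attach, Smooth c.1
  | .dec _ _ _ hi lo => vars hi = vars lo ∧ Smooth hi ∧ Smooth lo
  | _ => True
  decreasing_by all_goals first
    | (have := List.sizeOf_lt_of_mem c.2
       simp only [Prob.conj.sizeOf_spec]
       omega)
    | decreasing_tactic

/-- Decomposability: at every conjunction node, the children have pairwise disjoint
variable sets. -/
def Decomposable [DecidableEq α] : Prob α → Prop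
  | .conj cs => (∀ c ∈ cs.attach, Decomposable c.1) ∧
      cs.Pairwise (fun c d => Disjoint (vars c) (vars d))
  | .dec _ _ _ hi lo => Decomposable hi ∧ Decomposable lo
  | _ => True
  decreasing_by all_goals first
    | (have := List.sizeOf_lt_of_mem c.2
       simp only [Prob.conj.sizeOf_spec]
       omega)
    | decreasing_tactic

end Prob

namespace Prob

/-- The probability that the bottom-up sampling algorithm `ProbSample` outputs the
assignment `τ`: at each decision node visited, the branch followed by `τ` is chosen
independently with probability `θ_hi(n)·γ(hi(n))/γ(n)` (resp. `θ_lo(n)·γ(lo(n))/γ(n)`). -/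
noncomputable def sampleProb {α : Type} : Prob α → (α → Bool) → ℝ
  | .tru, _ => 1
  | .fls, _ => 1
  | .conj cs, τ => (cs.attach.map (fun c => sampleProb c.1 τ)).prod
  | .dec v θh θl hi lo, τ =>
      if τ v then (θh * gamma hi / (θl * gamma lo + θh * gamma hi)) * sampleProb hi τ
      else (θl * gamma lo / (θl * gamma lo + θh * gamma hi)) * sampleProb lo τ
  decreasing_by all_goals first
    | (have := List.sizeOf_lt_of_mem c.2
       simp only [Prob.conj.sizeOf_spec]
       omega)
    | decreasing_tactic

end Prob

open Prob

namespace Prob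

theorem gamma_nonneg {α : Type} : ∀ (ψ : Prob α), ValidParams ψ → 0 ≤ gamma ψ
  | .tru, _ => by rw [gamma]; norm_num
  | .fls, _ => by rw [gamma]
  | .conj cs, h => by
      rw [gamma, ValidParams] at *
      apply List.prod_nonneg
      intro x hx
      simp only [List.mem_map] at hx
      obtain ⟨c, hc, rfl⟩ := hx
      exact gamma_nonneg c.1 (h c hc)
  | .dec v θh θl hi lo, h => by
      rw [gamma, ValidParams] at *
      obtain ⟨h1, h2, _, h4, h5⟩ := h
      have := gamma_nonneg hi h4
      have := gamma_nonneg lo h5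
      positivity
  decreasing_by all_goals first
    | (have := List.sizeOf_lt_of_mem c.2
       simp only [Prob.conj.sizeOf_spec]
       omega)
    | decreasing_tactic

theorem gamma_pos {α : Type} :
    ∀ (ψ : Prob α), ∀ τ : α → Bool, ValidParams ψ → eval ψ τ = true → 0 < gamma ψ
  | .tru, _, _, _ => by rw [gamma]; norm_num
  | .fls, τ, _, he => by rw [eval] at he; exact absurd he (by simp)
  | .conj cs, τ, h, he => by
      rw [gamma]
      rw [ValidParams] at h
      rw [eval, List.all_eq_true] at he
      apply List.prod_pos
      intro x hx
      simp only [List.mem_map] at hx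
      obtain ⟨c, hc, rfl⟩ := hx
      exact gamma_pos c.1 τ (h c hc) (he c hc)
  | .dec v θh θl hi lo, τ, h, he => by
      rw [gamma]
      rw [ValidParams] at h
      obtain ⟨h1, h2, _, h4, h5⟩ := h
      rw [eval] at he
      by_cases hv : τ v
      · rw [if_pos hv] at he
        have := gamma_pos hi τ h4 he
        have := gamma_nonneg lo h5
        positivity
      · rw [if_neg hv] at he
        have := gamma_pos lo τ h5 he
        have := gamma_nonneg hi h4
        positivity
  decreasing_by all_goals first
    | (have := List.sizeOf_lt_of_mem c.2
       simp only [Prob.conj.sizeOf_spec]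
       omega)
    | decreasing_tactic

theorem sampleProb_eq {α : Type} :
    ∀ (ψ : Prob α), ∀ τ : α → Bool, ValidParams ψ → eval ψ τ = true →
      sampleProb ψ τ = weight ψ τ / gamma ψ
  | .tru, τ, _, _ => by rw [sampleProb, weight, gamma]; norm_num
  | .fls, τ, _, he => by rw [eval] at he; exact absurd he (by simp)
  | .conj cs, τ, h, he => by
      rw [sampleProb, weight, gamma]
      rw [ValidParams] at h
      rw [eval, List.all_eq_true] at he
      rw [eq_div_iff (by
        apply ne_of_gt
        apply List.prod_pos
        intro x hx
        simp only [List.mem_map] at hx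
        obtain ⟨c, hc, rfl⟩ := hx
        exact gamma_pos c.1 τ (h c hc) (he c hc))]
      rw [← List.prod_map_mul]
      congr 1
      apply List.map_congr_left
      intro c hc
      have hg := gamma_pos c.1 τ (h c hc) (he c hc)
      rw [sampleProb_eq c.1 τ (h c hc) (he c hc), div_mul_cancel₀ _ (ne_of_gt hg)]
  | .dec v θh θl hi lo, τ, h, he => by
      rw [sampleProb, weight, gamma]
      rw [ValidParams] at h
      obtain ⟨h1, h2, _, h4, h5⟩ := h
      rw [eval] at he
      by_cases hv : τ v
      · rw [if_pos hv] at he ⊢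
        rw [if_pos hv]
        have hghi := gamma_pos hi τ h4 he
        have hglo := gamma_nonneg lo h5
        have hγ : 0 < θl * gamma lo + θh * gamma hi := by positivity
        rw [sampleProb_eq hi τ h4 he]
        field_simp
      · rw [if_neg hv] at he ⊢
        rw [if_neg hv]
        have hglo := gamma_pos lo τ h5 he
        have hghi := gamma_nonneg hi h4
        have hγ : 0 < θl * gamma lo + θh * gamma hi := by positivity
        rw [sampleProb_eq lo τ h5 he]
        field_simp
  decreasing_by all_goals first
    | (have := List.sizeOf_lt_of_mem c.2
       simp only [Prob.conj.sizeOf_spec]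
       omega)
    | decreasing_tactic

end Prob

/-- Each satisfying assignment `τ` of the formula represented by a smooth,
deterministic, decomposable PROB `ψ` with strictly positive branch parameters is
sampled by `ProbSample` with probability exactly
`∏_{n ∈ Rep_ψ(τ)} [(1 − I_n)·θ_lo(n) + I_n·θ_hi(n)] / γ(root)`. -/
theorem probSample_prob_eq {α : Type} [Fintype α] [DecidableEq α]
    (ψ : Prob α) (hsmooth : Smooth ψ) (hdecomp : Decomposable ψ)
    (hvalid : ValidParams ψ) (τ : α → Bool) (hsat : eval ψ τ = true) :
    sampleProb ψ τ = weight ψ τ / gamma ψ := by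
  exact sampleProb_eq ψ τ hvalid hsat
end

section
/- Let ψ be a decomposable PROB and c a conjunction node with children c_1,...,c_j having pairwise disjoint variable sets. Then the satisfying assignments of the formula at c over vars(c_1) ∪ ... ∪ vars(c_j) are exactly the combinations of independently chosen satisfying assignments of each child, and hence the model count at c is the product of the children's model counts. -/
open Prob

/-!
A child of a conjunction node reads only its own variables, so when the variable sets are
disjoint, satisfying assignments of the children can be glued into one assignment. For the
counts, exchanging two assignments outside `vars c` is an involution on pairs of assignments
that matches (model of `c`, model of the remaining conjunction) with (model of the whole
conjunction, arbitrary assignment); hence each child contributes its count times `2 ^ |α|`,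
and induction over the children gives the product formula.
-/

open Finset

theorem Finset.card_filter_mul_card_filter_of_dependsOn {α β : Type*} [Fintype α]
    [DecidableEq α] [Fintype β] {f g : (α → β) → Bool} {S : Set α}
    (hf : DependsOn f S) (hg : DependsOn g Sᶜ) :
    #{τ | f τ = true} * #{τ | g τ = true} = #{τ | (f τ && g τ) = true} * Fintype.card (α → β) := by
  classical
  let swap : (α → β) × (α → β) → (α → β) × (α → β) :=
    fun x => (S.piecewise x.1 x.2, S.piecewise x.2 x.1)
  have hS : ∀ a b : α → β, ∀ v ∈ S, S.piecewise a b v = a v := fun a b v hv => by simp [hv]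
  have hSc : ∀ a b : α → β, ∀ v ∈ Sᶜ, S.piecewise a b v = b v :=
    fun a b v hv => Set.piecewise_eq_of_notMem _ _ _ hv
  have swap_swap : ∀ x, swap (swap x) = x := fun x => by
    ext v <;> by_cases hv : v ∈ S <;> simp [swap, hv]
  have key : #(({τ | f τ = true} : Finset _) ×ˢ ({τ | g τ = true} : Finset _)) =
      #(({τ | (f τ && g τ) = true} : Finset _) ×ˢ (univ : Finset (α → β))) := by
    refine card_nbij' swap swap ?_ ?_ (fun x _ => swap_swap x) (fun x _ => swap_swap x)
    · rintro ⟨a, b⟩ hab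
      simp_all [swap, hf (hS a b), hg (hSc a b)]
    · rintro ⟨a, b⟩ hab
      simp_all [swap, hf (hS a b), hg (hSc b a)]
  rwa [card_product, card_product, card_univ] at key

theorem List.exists_eqOn_of_pairwise_disjoint {ι α β : Type*} [Nonempty β] {l : List ι}
    {s : ι → Finset α} (hl : l.Pairwise fun i j => _root_.Disjoint (s i) (s j)) (σ : ι → α → β) :
    ∃ τ : α → β, ∀ i ∈ l, Set.EqOn τ (σ i) (s i) := by
  classical
  have : Std.Symm fun i j => _root_.Disjoint (s i) (s j) := ⟨fun _ _ h => h.symm⟩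
  refine ⟨fun a => if h : ∃ i ∈ l, a ∈ s i then σ h.choose a else Classical.arbitrary β,
    fun i hi a ha => ?_⟩
  have h : ∃ i ∈ l, a ∈ s i := ⟨i, hi, ha⟩
  obtain ⟨hmem, hmem_s⟩ := h.choose_spec
  have : h.choose = i := by
    by_contra hne
    exact Finset.disjoint_left.mp (hl.forall hmem hi hne) hmem_s ha
  simp [h, this]

namespace Prob

variable {α : Type}

theorem eval_conj (cs : List (Prob α)) (τ : α → Bool) :
    eval (conj cs) τ = cs.all (eval · τ) := by
  simp [eval]

theorem eval_conj_eq_true {cs : List (Prob α)} {τ : α → Bool} :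
    eval (conj cs) τ = true ↔ ∀ c ∈ cs, eval c τ = true := by
  simp [eval_conj]

theorem mem_vars_conj [DecidableEq α] {cs : List (Prob α)} {v : α} :
    v ∈ vars (conj cs) ↔ ∃ c ∈ cs, v ∈ vars c := by
  have foldr_union : ∀ l : List (Finset α), v ∈ l.foldr (· ∪ ·) ∅ ↔ ∃ s ∈ l, v ∈ s := by
    intro l; induction l <;> simp_all
  simp [vars, foldr_union]

theorem dependsOn_eval [DecidableEq α] : ∀ p : Prob α, DependsOn (eval p) (vars p)
  | .tru, _, _, _ => by simp only [eval]
  | .fls, _, _, _ => by simp only [eval]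
  | .conj cs, τ, τ', h => by
      rw [Bool.eq_iff_iff, eval_conj_eq_true, eval_conj_eq_true]
      refine forall₂_congr fun c hc => ?_
      rw [dependsOn_eval c fun v hv => h v (mem_vars_conj.2 ⟨c, hc, hv⟩)]
  | .dec v _ _ hi lo, τ, τ', h => by
      have hv : τ v = τ' v := h v (by simp [vars])
      simp only [eval, hv]
      split
      · exact dependsOn_eval hi fun w hw => h w (by simp [vars, hw])
      · exact dependsOn_eval lo fun w hw => h w (by simp [vars, hw])

variable [Fintype α] [DecidableEq α]

abbrev modelCount (p : Prob α) : ℕ := #{τ | eval p τ = true}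

theorem modelCount_mul_modelCount_conj {c : Prob α} {cs : List (Prob α)}
    (hc : ∀ d ∈ cs, Disjoint (vars c) (vars d)) :
    modelCount c * modelCount (conj cs) = modelCount (conj (c :: cs)) * 2 ^ Fintype.card α := by
  have hcs : DependsOn (eval (conj cs)) (↑(vars c))ᶜ := by
    refine (dependsOn_eval _).mono fun v hv hvc => ?_
    obtain ⟨d, hd, hvd⟩ := mem_vars_conj.1 hv
    exact Finset.disjoint_left.1 (hc d hd) hvc hvd
  have := Finset.card_filter_mul_card_filter_of_dependsOn (dependsOn_eval c) hcs
  simpa [modelCount, eval_conj, Fintype.card_fun] using this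

theorem prod_modelCount_mul {cs : List (Prob α)}
    (hcs : cs.Pairwise fun c d => Disjoint (vars c) (vars d)) :
    (cs.map modelCount).prod * 2 ^ Fintype.card α =
      modelCount (conj cs) * (2 ^ Fintype.card α) ^ cs.length := by
  induction cs with
  | nil => simp [modelCount, eval_conj]
  | cons c cs ih =>
    obtain ⟨hc, hcs⟩ := List.pairwise_cons.1 hcs
    rw [List.map_cons, List.prod_cons, mul_assoc, ih hcs, ← mul_assoc,
      modelCount_mul_modelCount_conj hc, List.length_cons, pow_succ]
    ring

end Prob

/-- At a decomposable conjunction node with children `c₁,…,c_j` having pairwise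
disjoint variable sets: an assignment satisfies the node iff it satisfies every child;
satisfying assignments of the children can be combined independently; and the model
counts multiply (counting over all assignments of `α`, each of the `j` child counts
carries a factor `2^{|α| − |vars cᵢ|}`, which yields the stated identity). -/
theorem conjunction_node_decomposable {α : Type} [Fintype α] [DecidableEq α]
    (cs : List (Prob α)) (hne : cs ≠ [])
    (hdisj : cs.Pairwise fun c d => Disjoint (vars c) (vars d)) :
    (∀ τ, eval (Prob.conj cs) τ = true ↔ ∀ c ∈ cs, eval c τ = true) ∧
    (∀ σ : Prob α → (α → Bool), (∀ c ∈ cs, eval c (σ c) = true) →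
      ∃ τ, eval (Prob.conj cs) τ = true ∧ ∀ c ∈ cs, ∀ v ∈ vars c, τ v = σ c v) ∧
    (cs.map fun c => (Finset.univ.filter fun τ : α → Bool => eval c τ = true).card).prod
      = (Finset.univ.filter fun τ : α → Bool => eval (Prob.conj cs) τ = true).card
        * (2 ^ Fintype.card α) ^ (cs.length - 1) := by
  refine ⟨fun τ => eval_conj_eq_true, fun σ hσ => ?_, ?_⟩
  · obtain ⟨τ, hτ⟩ := List.exists_eqOn_of_pairwise_disjoint hdisj σ
    refine ⟨τ, eval_conj_eq_true.2 fun c hc => ?_, hτ⟩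
    rw [dependsOn_eval c fun v hv => hτ c hc hv]
    exact hσ c hc
  · obtain ⟨n, hn⟩ := Nat.exists_eq_add_one_of_ne_zero (List.length_pos_iff.2 hne).ne'
    have := prod_modelCount_mul hdisj
    rw [hn, pow_succ, ← mul_assoc] at this
    rw [hn, Nat.add_sub_cancel]
    exact Nat.eq_of_mul_eq_mul_right (Nat.two_pow_pos _) this
end

section
/- An assignment τ over variables {n_v, s_v : v ∈ V} satisfying the relaxed encoding F of graph G = (V,E) has the property that the set V_τ = {v : τ(n_v) = true} induces a subgraph of G in which every vertex of V_τ that is not a terminal (s-variable false) has at least two neighbors in V_τ whenever it has at least one neighbor in V_τ, and every terminal vertex (s-variable true) has at most one neighbor in V_τ. -/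
variable {V : Type*}

/-- `v` is a terminal vertex of the path `l` (its first or last vertex). -/
def IsTerminal (l : List V) (v : V) : Prop :=
  l.head? = some v ∨ l.getLast? = some v

/-- The path `l` has no detour: no vertex of `l` is adjacent (in `G`) to three or more
distinct vertices of `l`. -/
def NoDetour (G : SimpleGraph V) (l : List V) : Prop :=
  ∀ v ∈ l, ∀ x ∈ l, ∀ y ∈ l, ∀ z ∈ l,
    G.Adj v x → G.Adj v y → G.Adj v z → (x = y ∨ x = z ∨ y = z)

/-- A simple trip: a nonempty path (consecutive vertices adjacent) with all vertices
distinct and no detours. -/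
def IsSimpleTrip (G : SimpleGraph V) (l : List V) : Prop :=
  l ≠ [] ∧ l.Chain' G.Adj ∧ l.Nodup ∧ NoDetour G l

/-- The relaxed encoding `F` of simple trips of `G`, as a predicate on assignments to
the membership variables `n_v` and terminal variables `s_v`: the conjunction of the
constraint families (H1)–(H5). -/
def RelaxedEncoding (G : SimpleGraph V) (n s : V → Prop) : Prop :=
  -- (H1) at least one terminal variable is true
  (∃ v, s v) ∧
  -- (H2) every vertex on the trip has a neighbour on the trip
  (∀ v, n v → ∃ u, G.Adj v u ∧ n u) ∧
  -- (H3) at most two terminal variables are true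
  (∀ v₁ v₂ v₃, v₁ ≠ v₂ → v₁ ≠ v₃ → v₂ ≠ v₃ → ¬(s v₁ ∧ s v₂ ∧ s v₃)) ∧
  -- (H4) a terminal vertex is on the trip and has at most one neighbour on the trip
  (∀ v, s v → n v ∧ ∀ u w, G.Adj v u → G.Adj v w → u ≠ w → ¬(n u ∧ n w)) ∧
  -- (H5) if adjacent `v, u` are both on the trip then either `v` is terminal or
  -- exactly one other neighbour `w ≠ u` of `v` is on the trip
  (∀ v u, G.Adj v u → n v → n u →
    s v ∨ ((∃ w, G.Adj v w ∧ w ≠ u ∧ w ≠ v ∧ n w) ∧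
      (∀ w x, G.Adj v w → G.Adj v x → w ≠ u → x ≠ u → w ≠ x → ¬(n w ∧ n x))))

/-- Any satisfying assignment of the relaxed encoding has: every non-terminal vertex of
`V_τ = {v : n_v}` with at least one neighbour in `V_τ` has at least two neighbours in
`V_τ`, and every terminal vertex has at most one neighbour in `V_τ`. -/
theorem relaxedEncoding_degree_structure (G : SimpleGraph V) (n s : V → Prop)
    (h : RelaxedEncoding G n s) :
    (∀ v, n v → ¬ s v → (∃ u, G.Adj v u ∧ n u) →
      ∃ u w, u ≠ w ∧ G.Adj v u ∧ G.Adj v w ∧ n u ∧ n w) ∧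
    (∀ v, s v → ∀ u w, G.Adj v u → G.Adj v w → n u → n w → u = w) := by
  obtain ⟨-, -, -, h4, h5⟩ := h
  constructor
  · rintro v hv hns ⟨u, hadj, hu⟩
    rcases h5 v u hadj hv hu with hs | ⟨⟨w, hw1, hw2, -, hw4⟩, -⟩
    · exact absurd hs hns
    · exact ⟨u, w, fun e => hw2 e.symm, hadj, hw1, hu, hw4⟩
  · intro v hs u w h1 h2 hu hw
    by_contra hne
    exact (h4 v hs).2 u w h1 h2 hne ⟨hu, hw⟩
end
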